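/- Let G₁ and G₂ be groups, h ∈ G₁ with h ≠ 1, and k ∈ G₂ with k ≠ 1. Let Γ = G₁ ∗ G₂ be the free product, set w := inl(h) · inr(k) ∈ Γ, and in ℓ²(Γ;ℂ) let η := (δ₁ + δ_w)/‖δ₁ + δ_w‖. Then for every g ∈ G₁, ⟨η, λ(inl g)η⟩ equals 1 if g = 1 and 0 otherwise, and for every g ∈ G₂, ⟨η, λ(inr g)η⟩ equals 1 if g = 1 and 0 otherwise. -/

import Mathlib

/-!
Since `λ(g)δ_x = δ_{gx}`, the overlap `⟪δ₁ + δ_w, λ(g)(δ₁ + δ_w)⟫` counts the coincidences among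
`1, w` and `g, gw`. If some homomorphism `φ` kills `g` but not `w` (for `g ∈ G₁` take the
projection onto `G₂`, and vice versa), then `g ≠ w` and `gw ≠ 1`, so the only coincidences are
`1 = g` and `w = gw`, both equivalent to `g = 1`. The overlap is therefore `2` or `0`, and
normalising divides it by `‖δ₁ + δ_w‖² = 2`.
-/

open Monoid
open scoped ENNReal InnerProductSpace

noncomputable section

private theorem translMem {X : Type*} (e : X ≃ X) (f : lp (fun _ : X => ℂ) 2) :
    Memℓp (fun x => f (e x)) 2 := by
  apply memℓp_gen
  exact (Equiv.summable_iff e (f := fun i => ‖f i‖ ^ (2 : ℝ≥0∞).toReal)).2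
    ((lp.memℓp f).summable (by norm_num))

/-- The linear isometry equivalence `f ↦ f ∘ e` of `ℓ²(X;ℂ)` induced by a bijection
`e` of `X`. -/
def translIso {X : Type*} (e : X ≃ X) :
    lp (fun _ : X => ℂ) 2 ≃ₗᵢ[ℂ] lp (fun _ : X => ℂ) 2 where
  toFun f := ⟨fun x => f (e x), translMem e f⟩
  invFun f := ⟨fun x => f (e.symm x), translMem e.symm f⟩
  map_add' f g := by ext x; simp [lp.coeFn_add]; rfl
  map_smul' c f := by ext x; simp [lp.coeFn_smul]
  left_inv f := by ext x; simp
  right_inv f := by ext x; simp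
  norm_map' f := by
    rw [lp.norm_eq_tsum_rpow (by norm_num), lp.norm_eq_tsum_rpow (by norm_num)]
    congr 1
    exact e.tsum_eq (f := fun x => ‖f x‖ ^ (2 : ℝ≥0∞).toReal)

/-- The left translation `λ(g)` on `ℓ²(Γ;ℂ)`, the unitary given by
`(λ(g) f)(x) = f (g⁻¹ * x)`. -/
def leftTransl {Γ : Type*} [Group Γ] (g : Γ) :
    lp (fun _ : Γ => ℂ) 2 ≃ₗᵢ[ℂ] lp (fun _ : Γ => ℂ) 2 :=
  translIso (Equiv.mulLeft g⁻¹)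

theorem leftTransl_apply {Γ : Type*} [Group Γ] (g : Γ) (f : lp (fun _ : Γ => ℂ) 2) (x : Γ) :
    leftTransl g f x = f (g⁻¹ * x) :=
  rfl

theorem leftTransl_one_apply {Γ : Type*} [Group Γ] (f : lp (fun _ : Γ => ℂ) 2) :
    leftTransl 1 f = f := by
  ext x
  rw [leftTransl_apply, inv_one, one_mul]

theorem leftTransl_single {Γ : Type*} [Group Γ] [DecidableEq Γ] (g x : Γ) (c : ℂ) :
    leftTransl g (lp.single 2 x c) = lp.single 2 (g * x) c := by
  ext y
  simp only [leftTransl_apply, lp.single_apply, Pi.single_apply, inv_mul_eq_iff_eq_mul]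

theorem lp.inner_single_single {𝕜 ι E : Type*} [RCLike 𝕜] [NormedAddCommGroup E]
    [InnerProductSpace 𝕜 E] [DecidableEq ι] (x y : ι) (a b : E) :
    ⟪(lp.single 2 x a : lp (fun _ : ι => E) 2), lp.single 2 y b⟫_𝕜 =
      if x = y then ⟪a, b⟫_𝕜 else 0 := by
  rw [lp.inner_single_left, lp.single_apply, Pi.single_apply]
  split_ifs
  · rfl
  · exact inner_zero_right a

theorem inner_norm_inv_smul_map_norm_inv_smul {𝕜 E F : Type*} [RCLike 𝕜] [NormedAddCommGroup E]
    [InnerProductSpace 𝕜 E] [Module ℝ E] [IsScalarTower ℝ 𝕜 E] [FunLike F E E]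
    [LinearMapClass F 𝕜 E E] (T : F) (v : E) :
    ⟪‖v‖⁻¹ • v, T (‖v‖⁻¹ • v)⟫_𝕜 = ⟪v, T v⟫_𝕜 / ⟪v, v⟫_𝕜 := by
  rw [RCLike.real_smul_eq_coe_smul (K := 𝕜), map_smul, inner_smul_left, inner_smul_right,
    RCLike.conj_ofReal, ← mul_assoc, div_eq_inv_mul, RCLike.ofReal_inv, ← mul_inv, ← sq,
    inner_self_eq_norm_sq_to_K]

theorem inner_add_single_leftTransl_add_single {Γ : Type*} [Group Γ] [DecidableEq Γ] {w g : Γ}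
    (hne : g ≠ w) (hmul : g * w ≠ 1) :
    ⟪(lp.single 2 1 1 + lp.single 2 w 1 : lp (fun _ : Γ => ℂ) 2),
      leftTransl g (lp.single 2 1 1 + lp.single 2 w 1)⟫_ℂ = if g = 1 then 2 else 0 := by
  rw [map_add, leftTransl_single, leftTransl_single, mul_one, inner_add_left, inner_add_right,
    inner_add_right, lp.inner_single_single, lp.inner_single_single, lp.inner_single_single,
    lp.inner_single_single]
  by_cases hg : g = 1
  · subst hg
    simp [hne, hne.symm]
    norm_num
  · simp [hg, Ne.symm hg, hne.symm, Ne.symm hmul]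

theorem inner_normalized_leftTransl_of_map_eq_one {Γ Q : Type*} [Group Γ] [Group Q]
    [DecidableEq Γ] (φ : Γ →* Q) {w g : Γ} (hw : φ w ≠ 1) (hg : φ g = 1) :
    ⟪‖(lp.single 2 1 1 + lp.single 2 w 1 : lp (fun _ : Γ => ℂ) 2)‖⁻¹ •
        (lp.single 2 1 1 + lp.single 2 w 1 : lp (fun _ : Γ => ℂ) 2),
      leftTransl g (‖(lp.single 2 1 1 + lp.single 2 w 1 : lp (fun _ : Γ => ℂ) 2)‖⁻¹ •
        (lp.single 2 1 1 + lp.single 2 w 1))⟫_ℂ = if g = 1 then 1 else 0 := by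
  have hne : g ≠ w := fun h => hw (h ▸ hg)
  have hmul : g * w ≠ 1 := fun h => hw (by simpa [hg] using congrArg φ h)
  have hw₁ : (1 : Γ) ≠ w := fun h => hw (h ▸ map_one φ)
  set v : lp (fun _ : Γ => ℂ) 2 := lp.single 2 1 1 + lp.single 2 w 1
  have hv : ⟪v, v⟫_ℂ = 2 := by
    simpa [leftTransl_one_apply] using
      inner_add_single_leftTransl_add_single hw₁ (by rwa [one_mul, ne_comm])
  rw [inner_norm_inv_smul_map_norm_inv_smul, inner_add_single_leftTransl_add_single hne hmul, hv]
  split_ifs <;> norm_num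

/-- Example 3.5: the state `ω = ⟪η, ·η⟫` restricts to the canonical
trace states on the two factors. Let `h ≠ 1` in `G₁`, `k ≠ 1` in `G₂`,
`Γ = G₁ ∗ G₂`, `w = inl h * inr k`, and `η = (δ₁ + δ_w)/‖δ₁ + δ_w‖` in `ℓ²(Γ;ℂ)`.
Then for `g ∈ G₁`, `⟪η, λ(inl g) η⟫` is `1` if `g = 1` and `0` otherwise, and likewise
for `g ∈ G₂` with `inr`. -/
theorem free_joinings_stmt16
    {G₁ G₂ : Type*} [Group G₁] [Group G₂] [DecidableEq G₁] [DecidableEq G₂]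
    [DecidableEq (Coprod G₁ G₂)]
    (h : G₁) (hh : h ≠ 1) (k : G₂) (hk : k ≠ 1) :
    let Γ := Coprod G₁ G₂
    let w : Γ := Coprod.inl h * Coprod.inr k
    let δ₁ : lp (fun _ : Γ => ℂ) 2 := lp.single 2 (1 : Γ) (1 : ℂ)
    let δw : lp (fun _ : Γ => ℂ) 2 := lp.single 2 w (1 : ℂ)
    let η : lp (fun _ : Γ => ℂ) 2 := ‖δ₁ + δw‖⁻¹ • (δ₁ + δw)
    (∀ g : G₁, ⟪η, leftTransl (Coprod.inl g : Γ) η⟫_ℂ = if g = 1 then 1 else 0) ∧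
    (∀ g : G₂, ⟪η, leftTransl (Coprod.inr g : Γ) η⟫_ℂ = if g = 1 then 1 else 0) := by
  intro Γ w δ₁ δw η
  have hw₁ : Coprod.fst w ≠ 1 := by simpa [w] using hh
  have hw₂ : Coprod.snd w ≠ 1 := by simpa [w] using hk
  refine ⟨fun g => ?_, fun g => ?_⟩
  · refine (inner_normalized_leftTransl_of_map_eq_one _ hw₂ (Coprod.snd_apply_inl g)).trans ?_
    simp only [map_eq_one_iff _ Coprod.inl_injective]
  · refine (inner_normalized_leftTransl_of_map_eq_one _ hw₁ (Coprod.fst_apply_inr g)).trans ?_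
    simp only [map_eq_one_iff _ Coprod.inr_injective]

end
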